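/- Let A_{ν-1} = (q_{ν-1}, ξ_{ν-1}) and A_{ν+1} = (q_{ν+1}, ξ_{ν+1}) be points in ℝ², where α is irrational with a_{ν+1} = 1. Then the maximum of the product t·μ over all points (t,μ) on the line segment joining A_{ν-1} and A_{ν+1} equals G(α*_ν, α_{ν+2}⁻¹) = (α*_ν + α_{ν+2}⁻¹ + 1)/4. -/

import Mathlib

open Real Filter Set

/-- The function F from the paper. -/
noncomputable def Fm (x y : ℝ) : ℝ := (1 - x*y)^2 / (4*(1+x*y)*(1-x)*(1-y))

/-- The function G from the paper. -/
noncomputable def Gm (x y : ℝ) : ℝ := (x + y + 1)/4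

/-- Complete quotients of α : cq α 0 = α, cq α (n+1) = 1/{cq α n}. -/
noncomputable def cq (α : ℝ) : ℕ → ℝ
  | 0 => α
  | n+1 => (Int.fract (cq α n))⁻¹

/-- Partial quotients a_n of the continued fraction of α. -/
noncomputable def pquot (α : ℝ) (n : ℕ) : ℤ := ⌊cq α n⌋

/-- Denominators q_n of the convergents of α. -/
noncomputable def qd (α : ℝ) : ℕ → ℝ
  | 0 => 1
  | 1 => (pquot α 1 : ℝ)
  | n+2 => (pquot α (n+2) : ℝ) * qd α (n+1) + qd α n

/-- Numerators p_n of the convergents of α. -/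
noncomputable def pnum (α : ℝ) : ℕ → ℝ
  | 0 => (pquot α 0 : ℝ)
  | 1 => (pquot α 1 : ℝ) * (pquot α 0 : ℝ) + 1
  | n+2 => (pquot α (n+2) : ℝ) * pnum α (n+1) + pnum α n

/-- ξ_n = |q_n α - p_n|. -/
noncomputable def xi (α : ℝ) (n : ℕ) : ℝ := |qd α n * α - pnum α n|

/-- α*_n = [0; a_n, ..., a_1] = q_{n-1}/q_n. -/
noncomputable def astar (α : ℝ) (n : ℕ) : ℝ := qd α (n-1) / qd α n

/-- Distance from x to the nearest integer. -/
noncomputable def nidist (x : ℝ) : ℝ := |x - round x|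

/-- The ν-th convergent denominator satisfies the Legendre condition. -/
noncomputable def LegendreDen (α : ℝ) (ν : ℕ) : Prop :=
  |α - pnum α ν / qd α ν| < 1/(2 * (qd α ν)^2)

/-- ψ_α(t) = min_{1 ≤ x ≤ t} ‖xα‖. -/
noncomputable def psif (α : ℝ) (t : ℝ) : ℝ :=
  sInf {d : ℝ | ∃ x : ℤ, 1 ≤ x ∧ (x:ℝ) ≤ t ∧ d = nidist (x*α)}

/-! The segment is parametrised as `(q_{ν-1} + s q_ν, ξ_ν (α_{ν+1} - s))`, `s ∈ [0, 1]`, using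
`ξ_{ν-1} = α_{ν+1} ξ_ν` and, since `a_{ν+1} = 1`, `q_{ν+1} = q_ν + q_{ν-1}` and
`ξ_{ν+1} = (α_{ν+1} - 1) ξ_ν`. The product `t μ` is then a concave quadratic in `s`, maximal at
`s = (α_{ν+1} - α*_ν) / 2 ∈ [0, 1]`, with maximum `ξ_ν (α_{ν+1} q_ν + q_{ν-1})² / (4 q_ν)`.
The identity `ξ_ν (α_{ν+1} q_ν + q_{ν-1}) = 1` reduces it to `(α*_ν + α_{ν+1}) / 4`, and
`α_{ν+1} = 1 + α_{ν+2}⁻¹`. -/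

noncomputable def eta (α : ℝ) (n : ℕ) : ℝ := qd α n * α - pnum α n

section ContinuedFraction

variable {α : ℝ}

theorem irrational_cq (hα : Irrational α) : ∀ n, Irrational (cq α n)
  | 0 => hα
  | n + 1 => by
    rw [cq, ← Int.self_sub_floor]
    exact ((irrational_cq hα n).sub_intCast _).inv

theorem one_lt_cq_succ (hα : Irrational α) (n : ℕ) : 1 < cq α (n + 1) := by
  have hfract : 0 < Int.fract (cq α n) := Int.fract_pos.mpr ((irrational_cq hα n).ne_int _)
  rw [cq, lt_inv_comm₀ one_pos hfract, inv_one]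
  exact Int.fract_lt_one _

theorem cq_succ_pos (hα : Irrational α) (n : ℕ) : 0 < cq α (n + 1) :=
  one_pos.trans (one_lt_cq_succ hα n)

theorem inv_cq_succ (α : ℝ) (n : ℕ) : (cq α (n + 1))⁻¹ = cq α n - pquot α n := by
  rw [cq, inv_inv, pquot, Int.self_sub_floor]

theorem one_le_pquot_succ (hα : Irrational α) (n : ℕ) : (1 : ℝ) ≤ pquot α (n + 1) := by
  have : (1 : ℤ) ≤ pquot α (n + 1) := Int.le_floor.mpr (by exact_mod_cast (one_lt_cq_succ hα n).le)
  exact_mod_cast this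

theorem one_le_qd (hα : Irrational α) : ∀ n, 1 ≤ qd α n
  | 0 => le_rfl
  | 1 => one_le_pquot_succ hα 0
  | n + 2 => by
    have := one_le_pquot_succ hα (n + 1)
    have := one_le_qd hα (n + 1)
    have := one_le_qd hα n
    rw [qd]
    nlinarith

theorem qd_le_qd_succ (hα : Irrational α) : ∀ n, qd α n ≤ qd α (n + 1)
  | 0 => one_le_pquot_succ hα 0
  | n + 1 => by
    have := one_le_pquot_succ hα (n + 1)
    have := one_le_qd hα (n + 1)
    have := one_le_qd hα n
    rw [qd]
    nlinarith

theorem pnum_succ_mul_qd_sub_pnum_mul_qd_succ (α : ℝ) :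
    ∀ n, pnum α (n + 1) * qd α n - pnum α n * qd α (n + 1) = (-1) ^ n
  | 0 => by simp only [pnum, qd]; ring
  | n + 1 => by
    rw [pnum, qd, pow_succ, ← pnum_succ_mul_qd_sub_pnum_mul_qd_succ α n]
    ring

theorem eta_add_two (α : ℝ) (n : ℕ) :
    eta α (n + 2) = pquot α (n + 2) * eta α (n + 1) + eta α n := by
  simp only [eta, qd, pnum]
  ring

theorem eta_succ_mul_cq (hα : Irrational α) : ∀ n, eta α (n + 1) * cq α (n + 2) = -eta α n
  | 0 => by
    have h0 : eta α 0 = (cq α 1)⁻¹ := by rw [inv_cq_succ]; simp [eta, qd, pnum, cq]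
    have h1 : eta α 1 = pquot α 1 * (cq α 1)⁻¹ - 1 := by
      rw [inv_cq_succ]; simp [eta, qd, pnum, cq]; ring
    have h2 : (cq α 2)⁻¹ = cq α 1 - pquot α 1 := inv_cq_succ α 1
    have : cq α 1 ≠ 0 := (cq_succ_pos hα 0).ne'
    have : cq α 2 ≠ 0 := (cq_succ_pos hα 1).ne'
    show eta α 1 * cq α 2 = -eta α 0
    rw [h0, h1]
    field_simp at h2 ⊢
    linear_combination h2
  | n + 1 => by
    have hinv : (cq α (n + 3))⁻¹ = cq α (n + 2) - pquot α (n + 2) := inv_cq_succ α (n + 2)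
    have hmul : cq α (n + 3) * (cq α (n + 3))⁻¹ = 1 :=
      mul_inv_cancel₀ (cq_succ_pos hα (n + 2)).ne'
    have ih := eta_succ_mul_cq hα n
    show eta α (n + 2) * cq α (n + 3) = -eta α (n + 1)
    rw [eta_add_two]
    linear_combination cq α (n + 3) * ih + eta α (n + 1) * cq α (n + 3) * hinv - eta α (n + 1) * hmul

theorem xi_eq_cq_mul_xi_succ (hα : Irrational α) (n : ℕ) :
    xi α n = cq α (n + 2) * xi α (n + 1) := by
  rw [xi, xi, ← eta, ← eta, ← abs_neg (eta α n), ← eta_succ_mul_cq hα n, abs_mul,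
    abs_of_pos (cq_succ_pos hα (n + 1)), mul_comm]

theorem xi_add_two (hα : Irrational α) (n : ℕ) :
    xi α (n + 2) = (cq α (n + 2) - pquot α (n + 2)) * xi α (n + 1) := by
  rw [xi_eq_cq_mul_xi_succ hα (n + 1), ← inv_cq_succ, ← mul_assoc,
    inv_mul_cancel₀ (cq_succ_pos hα (n + 2)).ne', one_mul]

theorem xi_succ_mul_eq_one (hα : Irrational α) (n : ℕ) :
    xi α (n + 1) * (cq α (n + 2) * qd α (n + 1) + qd α n) = 1 := by
  have hpos : 0 < cq α (n + 2) * qd α (n + 1) + qd α n := by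
    have := cq_succ_pos hα (n + 1)
    have := one_le_qd hα (n + 1)
    have := one_le_qd hα n
    positivity
  have hdet : eta α (n + 1) * (cq α (n + 2) * qd α (n + 1) + qd α n) = -(-1) ^ n := by
    have hrec := eta_succ_mul_cq hα n
    rw [← pnum_succ_mul_qd_sub_pnum_mul_qd_succ α n]
    unfold eta at hrec ⊢
    linear_combination qd α (n + 1) * hrec
  rw [xi, ← eta, ← abs_of_pos hpos, ← abs_mul, hdet]
  simp

end ContinuedFraction

theorem isGreatest_mul_image_segment {q' q x β : ℝ} (hq : 0 < q) (hx : 0 ≤ x)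
    (hlow : q' ≤ β * q) (hhigh : β * q ≤ q' + 2 * q) :
    IsGreatest ((fun p : ℝ × ℝ => p.1 * p.2) ''
        segment ℝ ((q', β * x) : ℝ × ℝ) (q' + q, (β - 1) * x))
      (x * (β * q + q') ^ 2 / (4 * q)) := by
  have hsegment : ∀ s : ℝ, (1 - s) • ((q', β * x) : ℝ × ℝ) + s • (q' + q, (β - 1) * x)
      = (q' + s * q, x * (β - s)) := by
    intro s
    ext <;> simp only [Prod.fst_add, Prod.snd_add, Prod.smul_fst, Prod.smul_snd, smul_eq_mul] <;>
      ring
  constructor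
  · set s := (β * q - q') / (2 * q)
    have hs0 : 0 ≤ s := div_nonneg (by linarith) (by linarith)
    have hs1 : s ≤ 1 := (div_le_one (by linarith)).mpr (by linarith)
    refine ⟨_, ⟨1 - s, s, by linarith, hs0, by ring, rfl⟩, ?_⟩
    simp only [hsegment, s]
    field_simp
    ring
  · rintro _ ⟨_, ⟨a, s, ha, hs, has, rfl⟩, rfl⟩
    obtain rfl : a = 1 - s := by linarith
    simp only [hsegment]
    rw [le_div_iff₀ (by positivity)]
    -- `(β q + q')² - 4 q (q' + s q)(β - s) = (β q - q' - 2 s q)²`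
    nlinarith [mul_nonneg hx (sq_nonneg (β * q - q' - 2 * s * q))]

theorem stmt10 (α : ℝ) (hα : Irrational α) (ν : ℕ) (hν : 1 ≤ ν)
    (ha : pquot α (ν+1) = 1) :
    IsGreatest ((fun p : ℝ × ℝ => p.1 * p.2) ''
        segment ℝ ((qd α (ν-1), xi α (ν-1)) : ℝ × ℝ) (qd α (ν+1), xi α (ν+1)))
      (Gm (astar α ν) (cq α (ν+2))⁻¹) := by
  obtain ⟨m, rfl⟩ : ∃ m, ν = m + 1 := Nat.exists_eq_add_of_le' hν
  have ha' : (pquot α (m + 2) : ℝ) = 1 := by exact_mod_cast ha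
  have hcq : cq α (m + 2) = 1 + (cq α (m + 3))⁻¹ := by
    linarith [inv_cq_succ α (m + 2)]
  have hcq_le : cq α (m + 2) ≤ 2 := by
    linarith [inv_le_one_of_one_le₀ (one_lt_cq_succ hα (m + 2)).le]
  have hxi_prev : xi α m = cq α (m + 2) * xi α (m + 1) := xi_eq_cq_mul_xi_succ hα m
  have hxi_next : xi α (m + 2) = (cq α (m + 2) - 1) * xi α (m + 1) := by
    rw [xi_add_two hα m, ha']
  have hqd : qd α (m + 2) = qd α m + qd α (m + 1) := by
    rw [qd, ha']
    ring
  have hq := one_le_qd hα (m + 1)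
  have hq' := one_le_qd hα m
  have hmono := qd_le_qd_succ hα m
  have hone := xi_succ_mul_eq_one hα m
  have hmax := isGreatest_mul_image_segment (q' := qd α m) (q := qd α (m + 1))
    (x := xi α (m + 1)) (β := cq α (m + 2)) (by linarith) (abs_nonneg _)
    (by nlinarith [one_lt_cq_succ hα (m + 1)]) (by nlinarith)
  convert hmax using 2
  · simp only [Nat.add_sub_cancel, hxi_prev, hxi_next, hqd]
  · rw [Gm, astar, Nat.add_sub_cancel, pow_two, ← mul_assoc, hone, hcq]
    field_simp
    ring
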